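/- arXiv:1809.10079 — 2 statements merged into one kernel-verified Lean document; each statement's English description precedes it below -/
import Mathlib

section
/- In any commutative multiplicatively idempotent semiring satisfying x + y + xyz = x + y, if 1 + 1 = 0 then 0 = 1, i.e., the semiring is trivial. -/
/-- In any commutative multiplicatively idempotent semiring satisfying
x + y + xyz = x + y, if 1 + 1 = 0 then the semiring is trivial. -/
theorem stmt_4 {S : Type*} [CommSemiring S]
    (idem : ∀ x : S, x * x = x)
    (h : ∀ x y z : S, x + y + x * y * z = x + y)
    (h11 : (1 : S) + 1 = 0) :
    (0 : S) = 1 := by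
  have := h 1 1 1
  simpa [h11] using this.symm
end

section
/- Let L be a nontrivial bounded distributive lattice with bottom 0 and top a, let 1 be a new element not in L, and define on S = L ∪ {1} operations: x + y = x ∨ y if x,y ∈ L; 0 + 1 = 1 + 0 = 1; x + 1 = 1 + x = a for x ∈ L \ {0}; 1 + 1 = a; and x·y = x ∧ y if x,y ∈ L, x·1 = 1·x = x, 1·1 = 1. Then (S,+,·,0,1) is a commutative multiplicatively idempotent semiring satisfying x + y + xyz = x + y. -/
open Classical in
/-- Addition on S = L ∪ {1}, where `none` is the new element 1 and the top of L
is denoted a. -/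
noncomputable def Sadd {L : Type*} [DistribLattice L] [BoundedOrder L] :
    Option L → Option L → Option L
  | some x, some y => some (x ⊔ y)
  | some x, none => if x = ⊥ then none else some ⊤
  | none, some y => if y = ⊥ then none else some ⊤
  | none, none => some ⊤

/-- Multiplication on S = L ∪ {1}. -/
def Smul {L : Type*} [DistribLattice L] [BoundedOrder L] :
    Option L → Option L → Option L
  | some x, some y => some (x ⊓ y)
  | some x, none => some x
  | none, some y => some y
  | none, none => none

/-- For a nontrivial bounded distributive lattice L, the structure
(L ∪ {1}, +, ·, 0, 1) is a commutative multiplicatively idempotent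
semiring satisfying x + y + xyz = x + y. -/
theorem stmt_11 {L : Type*} [DistribLattice L] [BoundedOrder L]
    (nontriv : (⊥ : L) ≠ ⊤) :
    (∀ x y z : Option L, Sadd (Sadd x y) z = Sadd x (Sadd y z)) ∧
    (∀ x y : Option L, Sadd x y = Sadd y x) ∧
    (∀ x : Option L, Sadd (some ⊥) x = x) ∧
    (∀ x : Option L, Sadd x (some ⊥) = x) ∧
    (∀ x y z : Option L, Smul (Smul x y) z = Smul x (Smul y z)) ∧
    (∀ x y : Option L, Smul x y = Smul y x) ∧
    (∀ x : Option L, Smul none x = x) ∧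
    (∀ x : Option L, Smul x none = x) ∧
    (∀ x y z : Option L, Smul x (Sadd y z) = Sadd (Smul x y) (Smul x z)) ∧
    (∀ x y z : Option L, Smul (Sadd x y) z = Sadd (Smul x z) (Smul y z)) ∧
    (∀ x : Option L, Smul (some ⊥) x = some ⊥) ∧
    (∀ x : Option L, Smul x (some ⊥) = some ⊥) ∧
    (∀ x : Option L, Smul x x = x) ∧
    (∀ x y z : Option L, Sadd (Sadd x y) (Smul (Smul x y) z) = Sadd x y) := by
  refine ⟨?_, ?_, ?_, ?_, ?_, ?_, ?_, ?_, ?_, ?_, ?_, ?_, ?_, ?_⟩ <;>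
    [ (rintro (_|x) (_|y) (_|z)); (rintro (_|x) (_|y)); (rintro (_|x));
      (rintro (_|x)); (rintro (_|x) (_|y) (_|z)); (rintro (_|x) (_|y));
      (rintro (_|x)); (rintro (_|x)); (rintro (_|x) (_|y) (_|z));
      (rintro (_|x) (_|y) (_|z)); (rintro (_|x)); (rintro (_|x));
      (rintro (_|x)); (rintro (_|x) (_|y) (_|z)) ] <;>
    simp only [Sadd, Smul] <;>
    (try split_ifs) <;>
    simp_all [sup_assoc, inf_assoc, inf_sup_left, inf_sup_right,
      sup_eq_bot_iff, sup_comm, inf_comm, Ne.symm nontriv] <;>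
    first
      | ac_rfl
      | exact congrArg (x ⊔ ·) (sup_eq_left.2 (inf_le_right.trans inf_le_right))
end
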